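/- arXiv:2206.09830 — 4 statements merged into one kernel-verified Lean document; each statement's English description precedes it below -/
import Mathlib

section
/- The row vector π = (1/15, 1/15, 1/5, 1/5, 1/15, 1/5, 1/5) satisfies πP = π, where P is the 7×7 transition matrix with rows [0,0,0,1,0,0,0], [0,0,0,0,1,0,0], [0,0,0,0,0,1/3,2/3], [1/3,0,2/3,0,0,0,0], [0,0,1,0,0,0,0], [0,1/3,0,2/3,0,0,0], [0,0,0,0,0,2/3,1/3]. -/
noncomputable def P : Matrix (Fin 7) (Fin 7) ℝ :=
  !![0,   0,   0,   1,   0,   0,   0;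
     0,   0,   0,   0,   1,   0,   0;
     0,   0,   0,   0,   0,   1/3, 2/3;
     1/3, 0,   2/3, 0,   0,   0,   0;
     0,   0,   1,   0,   0,   0,   0;
     0,   1/3, 0,   2/3, 0,   0,   0;
     0,   0,   0,   0,   0,   2/3, 1/3]

noncomputable def pi7 : Fin 7 → ℝ := ![1/15, 1/15, 1/5, 1/5, 1/15, 1/5, 1/5]


@[simp] lemma cons_val_five' {α : Type*} {m : ℕ} (x : α) (u : Fin m.succ.succ.succ.succ.succ → α) :
    Matrix.vecCons x u 5 = Matrix.vecHead (Matrix.vecTail (Matrix.vecTail (Matrix.vecTail (Matrix.vecTail u)))) :=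
  rfl

@[simp] lemma cons_val_six' {α : Type*} {m : ℕ} (x : α) (u : Fin m.succ.succ.succ.succ.succ.succ → α) :
    Matrix.vecCons x u 6 = Matrix.vecHead (Matrix.vecTail (Matrix.vecTail (Matrix.vecTail (Matrix.vecTail (Matrix.vecTail u))))) :=
  rfl

/-- The row vector π = (1/15, 1/15, 1/5, 1/5, 1/15, 1/5, 1/5) satisfies πP = π. -/
theorem pi_stationary : ∀ j : Fin 7, ∑ i : Fin 7, pi7 i * P i j = pi7 j := by
  intro j
  fin_cases j <;> simp [pi7, P, Fin.sum_univ_seven, Matrix.vecHead, Matrix.vecTail] <;> norm_num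
end

section
/- The 3-gonal bipyramid BP₃ (triangulation of S² with vertices 1,2,3,a,b, where 1,2,3 form a 3-cycle each joined to a and to b) contains exactly one zigzag up to reversing, i.e., it is z-knotted; its zigzag has length 18 and passes through all edges of all faces. -/
/-- A zigzag in a triangulation, written as a bi-infinite sequence of vertices
`z`: the edges of the zigzag are `eᵢ = {z i, z (i+1)}`.  Any two consecutive
edges are distinct, share the vertex `z (i+1)` and lie in a common (triangular)
face; the faces containing `eᵢ, eᵢ₊₁` and `eᵢ₊₁, eᵢ₊₂` are distinct, and the
edges `eᵢ` and `eᵢ₊₂` are disjoint. -/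
def IsZigzag {V : Type*} [DecidableEq V] (G : SimpleGraph V)
    (faces : Finset (Finset V)) (z : ℤ → V) : Prop :=
  ∀ i : ℤ,
    G.Adj (z i) (z (i + 1)) ∧
    z i ≠ z (i + 2) ∧
    (∃ F ∈ faces, z i ∈ F ∧ z (i + 1) ∈ F ∧ z (i + 2) ∈ F) ∧
    (∀ F ∈ faces, ∀ F' ∈ faces,
      (z i ∈ F ∧ z (i + 1) ∈ F ∧ z (i + 2) ∈ F) →
      (z (i + 1) ∈ F' ∧ z (i + 2) ∈ F' ∧ z (i + 3) ∈ F') → F ≠ F') ∧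
    ({z i, z (i + 1)} : Set V) ∩ {z (i + 2), z (i + 3)} = ∅

/-- The 3-gonal bipyramid BP₃: vertices 1,2,3 (here 0,1,2) forming a 3-cycle,
each joined to the apexes a (here 3) and b (here 4); this is the complete graph
on 5 vertices minus the edge {a,b}. -/
def BP3 : SimpleGraph (Fin 5) :=
  SimpleGraph.fromRel (fun x y => ¬(x = 3 ∧ y = 4) ∧ ¬(x = 4 ∧ y = 3))

/-- The six triangular faces of BP₃. -/
def BP3Faces : Finset (Finset (Fin 5)) :=
  {{0, 1, 3}, {1, 2, 3}, {0, 2, 3}, {0, 1, 4}, {1, 2, 4}, {0, 2, 4}}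

/-- The 18-periodic vertex sequence a,1,2,b,3,1,a,2,3,b,1,2,a,3,1,b,2,3 of the
zigzag a1,12,2b,b3,31,1a,a2,23,3b,b1,12,2a,a3,31,1b,b2,23,3a. -/
def bpZigzag : ℤ → Fin 5 :=
  fun i => ![3, 0, 1, 4, 2, 0, 3, 1, 2, 4, 0, 1, 3, 2, 0, 4, 1, 2]
    ⟨(i % 18).toNat, by omega⟩


/-!
Three consecutive vertices of a zigzag determine the next one: in a triangulation the edge
`{z (i+1), z (i+2)}` lies in exactly two faces, and `z (i+3)` is the third vertex of the one
not containing `z i`. As zigzags are invariant under shifts and reversal, a zigzag is then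
determined by any three consecutive vertices. In BP₃ every admissible starting triple occurs,
read forwards or backwards, in the 18-periodic zigzag `bpZigzag`.
-/

theorem Set.pair_inter_pair_eq_empty_iff {α : Type*} {a b c d : α} :
    ({a, b} : Set α) ∩ {c, d} = ∅ ↔ a ≠ c ∧ a ≠ d ∧ b ≠ c ∧ b ≠ d := by
  simp only [← Set.disjoint_iff_inter_eq_empty, Set.disjoint_insert_left,
    Set.disjoint_singleton_left, Set.mem_insert_iff, Set.mem_singleton_iff, not_or, and_assoc]

namespace IsZigzag

variable {V : Type*} [DecidableEq V] {G : SimpleGraph V} {faces : Finset (Finset V)}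

def Step (G : SimpleGraph V) (faces : Finset (Finset V)) (a b c d : V) : Prop :=
  G.Adj a b ∧ a ≠ c ∧ (∃ F ∈ faces, a ∈ F ∧ b ∈ F ∧ c ∈ F) ∧
    (∀ F ∈ faces, ∀ F' ∈ faces, (a ∈ F ∧ b ∈ F ∧ c ∈ F) → (b ∈ F' ∧ c ∈ F' ∧ d ∈ F') → F ≠ F') ∧
    ({a, b} : Set V) ∩ {c, d} = ∅

instance [DecidableRel G.Adj] (a b c d : V) : Decidable (Step G faces a b c d) :=
  decidable_of_iff
    (G.Adj a b ∧ a ≠ c ∧ (∃ F ∈ faces, a ∈ F ∧ b ∈ F ∧ c ∈ F) ∧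
      (∀ F ∈ faces, ∀ F' ∈ faces, (a ∈ F ∧ b ∈ F ∧ c ∈ F) → (b ∈ F' ∧ c ∈ F' ∧ d ∈ F') → F ≠ F') ∧
      (a ≠ c ∧ a ≠ d ∧ b ≠ c ∧ b ≠ d))
    (by rw [Step, Set.pair_inter_pair_eq_empty_iff])

theorem iff_forall_step {z : ℤ → V} :
    IsZigzag G faces z ↔ ∀ i, Step G faces (z i) (z (i + 1)) (z (i + 2)) (z (i + 3)) :=
  Iff.rfl

theorem comp_add {z : ℤ → V} (hz : IsZigzag G faces z) (k : ℤ) :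
    IsZigzag G faces (fun i => z (i + k)) := by
  intro i
  simpa only [add_right_comm _ _ k] using hz (i + k)

theorem comp_neg {z : ℤ → V} (hz : IsZigzag G faces z) : IsZigzag G faces (fun i => z (-i)) := by
  intro i
  obtain ⟨hadj, -, -, -, -⟩ := hz (-(i + 1))
  obtain ⟨-, hne, ⟨F, hF, hmem⟩, -, -⟩ := hz (-(i + 2))
  obtain ⟨-, -, -, hfaces, hdisj⟩ := hz (-(i + 3))
  simp only [show -(i + 1) + 1 = -i by ring, show -(i + 2) + 1 = -(i + 1) by ring,
    show -(i + 2) + 2 = -i by ring, show -(i + 3) + 1 = -(i + 2) by ring,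
    show -(i + 3) + 2 = -(i + 1) by ring, show -(i + 3) + 3 = -i by ring] at *
  refine ⟨hadj.symm, hne.symm, ⟨F, hF, hmem.2.2, hmem.2.1, hmem.1⟩, ?_, ?_⟩
  · intro F hF F' hF' hmem hmem'
    exact (hfaces F' hF' F hF ⟨hmem'.2.2, hmem'.2.1, hmem'.1⟩ ⟨hmem.2.2, hmem.2.1, hmem.1⟩).symm
  · rwa [Set.inter_comm, Set.pair_comm, Set.pair_comm (z (-i))]

theorem eq_of_forward_determined
    (hnext : ∀ z w : ℤ → V, IsZigzag G faces z → IsZigzag G faces w →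
      z 0 = w 0 → z 1 = w 1 → z 2 = w 2 → z 3 = w 3)
    {z w : ℤ → V} (hz : IsZigzag G faces z) (hw : IsZigzag G faces w)
    (h0 : z 0 = w 0) (h1 : z 1 = w 1) (h2 : z 2 = w 2) : z = w := by
  have key : ∀ i, z i = w i ∧ z (i + 1) = w (i + 1) ∧ z (i + 2) = w (i + 2) := by
    intro i
    induction i using Int.inductionOn' (b := 0) with
    | zero => exact ⟨h0, h1, h2⟩
    | succ i _ ih =>
      obtain ⟨e0, e1, e2⟩ := ih
      have e3 := hnext _ _ (hz.comp_add i) (hw.comp_add i)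
        (by simpa using e0) (by rwa [add_comm]) (by rwa [add_comm])
      refine ⟨e1, ?_, ?_⟩
      · convert e2 using 2 <;> ring
      · convert e3 using 2 <;> ring
    | pred i _ ih =>
      obtain ⟨e0, e1, e2⟩ := ih
      have e3 := hnext _ _ (hz.comp_neg.comp_add (-(i + 2))) (hw.comp_neg.comp_add (-(i + 2)))
        (by convert e2 using 2 <;> ring) (by convert e1 using 2 <;> ring)
        (by convert e0 using 2 <;> ring)
      refine ⟨?_, ?_, ?_⟩
      · convert e3 using 2 <;> ring
      · convert e0 using 2 <;> ring
      · convert e1 using 2 <;> ring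
  exact funext fun i => (key i).1

end IsZigzag

instance : DecidableRel BP3.Adj := fun a b =>
  decidable_of_iff _ (SimpleGraph.fromRel_adj _ a b).symm

def bpCycle : ZMod 18 → Fin 5 :=
  ![3, 0, 1, 4, 2, 0, 3, 1, 2, 4, 0, 1, 3, 2, 0, 4, 1, 2]

theorem bpZigzag_apply (i : ℤ) : bpZigzag i = bpCycle i := by
  have h := ZMod.val_intCast (n := 18) i
  unfold bpZigzag bpCycle
  congr 1
  apply Fin.ext
  change (i % 18).toNat = (i : ZMod 18).val
  omega

theorem bpCycle_step :
    ∀ x : ZMod 18, IsZigzag.Step BP3 BP3Faces (bpCycle x) (bpCycle (x + 1)) (bpCycle (x + 2))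
      (bpCycle (x + 3)) := by
  decide

theorem bpCycle_period_eq_zero : ∀ m : ZMod 18, (∀ x, bpCycle (x + m) = bpCycle x) → m = 0 := by
  decide

theorem bpCycle_covers_face_edges : ∀ F ∈ BP3Faces, ∀ a ∈ F, ∀ b ∈ F, a ≠ b →
    ∃ x : ZMod 18,
      (bpCycle x = a ∧ bpCycle (x + 1) = b) ∨ (bpCycle x = b ∧ bpCycle (x + 1) = a) := by
  decide

theorem bp3_step_start : ∀ a b c d : Fin 5, IsZigzag.Step BP3 BP3Faces a b c d →
    ∃ x : ZMod 18, (bpCycle x = a ∧ bpCycle (x + 1) = b ∧ bpCycle (x + 2) = c) ∨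
      (bpCycle (x + 2) = a ∧ bpCycle (x + 1) = b ∧ bpCycle x = c) := by
  decide

set_option synthInstance.maxSize 512 in
theorem bp3_step_next : ∀ a b c d d' : Fin 5,
    IsZigzag.Step BP3 BP3Faces a b c d → (∃ F ∈ BP3Faces, b ∈ F ∧ c ∈ F ∧ d ∈ F) →
    IsZigzag.Step BP3 BP3Faces a b c d' → (∃ F ∈ BP3Faces, b ∈ F ∧ c ∈ F ∧ d' ∈ F) → d = d' := by
  decide

theorem bpZigzag_isZigzag : IsZigzag BP3 BP3Faces bpZigzag :=
  IsZigzag.iff_forall_step.2 fun i => by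
    simpa only [bpZigzag_apply, Int.cast_add, Int.cast_one, Int.cast_ofNat] using bpCycle_step i

theorem bp3_isZigzag_apply_three_eq {z w : ℤ → Fin 5} (hz : IsZigzag BP3 BP3Faces z)
    (hw : IsZigzag BP3 BP3Faces w) (h0 : z 0 = w 0) (h1 : z 1 = w 1) (h2 : z 2 = w 2) :
    z 3 = w 3 := by
  have hstep_z := IsZigzag.iff_forall_step.1 hz 0
  have hstep_w := IsZigzag.iff_forall_step.1 hw 0
  obtain ⟨-, -, hface_z, -, -⟩ := hz 1
  obtain ⟨-, -, hface_w, -, -⟩ := hw 1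
  simp only [zero_add, Int.reduceAdd] at hstep_z hstep_w hface_z hface_w
  simp only [h0, h1, h2] at hstep_z hface_z
  exact bp3_step_next _ _ _ _ _ hstep_z hface_z hstep_w hface_w

theorem bp3_isZigzag_ext {z w : ℤ → Fin 5} (hz : IsZigzag BP3 BP3Faces z)
    (hw : IsZigzag BP3 BP3Faces w) (h0 : z 0 = w 0) (h1 : z 1 = w 1) (h2 : z 2 = w 2) : z = w :=
  IsZigzag.eq_of_forward_determined (fun _ _ => bp3_isZigzag_apply_three_eq) hz hw h0 h1 h2

theorem bp3_isZigzag_iff (z : ℤ → Fin 5) : IsZigzag BP3 BP3Faces z ↔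
    ∃ k : ℤ, z = (fun i => bpZigzag (i + k)) ∨ z = (fun i => bpZigzag (-(i + k))) := by
  refine ⟨fun hz => ?_, ?_⟩
  · obtain ⟨x, ⟨h0, h1, h2⟩ | ⟨h0, h1, h2⟩⟩ :=
      bp3_step_start _ _ _ _ (IsZigzag.iff_forall_step.1 hz 0)
    all_goals simp only [zero_add] at h0 h1 h2
    · refine ⟨x.val, .inl (bp3_isZigzag_ext hz (bpZigzag_isZigzag.comp_add _) ?_ ?_ ?_)⟩
      all_goals simp only [bpZigzag_apply]; push_cast [ZMod.natCast_zmod_val]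
      · rw [← h0]; ring_nf
      · rw [← h1]; ring_nf
      · rw [← h2]; ring_nf
    · refine ⟨-(x.val + 2), .inr (bp3_isZigzag_ext hz
        (bpZigzag_isZigzag.comp_neg.comp_add _) ?_ ?_ ?_)⟩
      all_goals simp only [bpZigzag_apply]; push_cast [ZMod.natCast_zmod_val]
      · rw [← h0]; ring_nf
      · rw [← h1]; ring_nf
      · rw [← h2]; ring_nf
  · rintro ⟨k, rfl | rfl⟩
    · exact bpZigzag_isZigzag.comp_add k
    · exact bpZigzag_isZigzag.comp_neg.comp_add k

theorem bpZigzag_periodic : Function.Periodic bpZigzag 18 := fun i => by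
  simp [bpZigzag_apply, show (18 : ZMod 18) = 0 from rfl]

theorem bpZigzag_period_le {m : ℤ} (hm : 0 < m) (h : Function.Periodic bpZigzag m) : 18 ≤ m := by
  have hm18 : (m : ZMod 18) = 0 := bpCycle_period_eq_zero _ fun x => by
    obtain ⟨i, rfl⟩ := ZMod.intCast_surjective x
    simpa [bpZigzag_apply] using h i
  exact Int.le_of_dvd hm ((ZMod.intCast_zmod_eq_zero_iff_dvd m 18).1 hm18)

theorem bpZigzag_covers_face_edges : ∀ F ∈ BP3Faces, ∀ a ∈ F, ∀ b ∈ F, a ≠ b →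
    ∃ i : ℤ, (bpZigzag i = a ∧ bpZigzag (i + 1) = b) ∨ (bpZigzag i = b ∧ bpZigzag (i + 1) = a) := by
  intro F hF a ha b hb hab
  obtain ⟨x, hx⟩ := bpCycle_covers_face_edges F hF a ha b hb hab
  obtain ⟨i, rfl⟩ := ZMod.intCast_surjective x
  exact ⟨i, by simpa [bpZigzag_apply] using hx⟩

/-- BP₃ is z-knotted: it contains exactly one zigzag up to reversing, of length
18, and this zigzag passes through all edges of all faces. -/
theorem BP3_z_knotted :
    IsZigzag BP3 BP3Faces bpZigzag ∧
    (∀ z : ℤ → Fin 5, IsZigzag BP3 BP3Faces z ↔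
      ∃ k : ℤ, z = (fun i => bpZigzag (i + k)) ∨ z = (fun i => bpZigzag (-(i + k)))) ∧
    (∀ i : ℤ, bpZigzag (i + 18) = bpZigzag i) ∧
    (∀ m : ℤ, 0 < m → (∀ i : ℤ, bpZigzag (i + m) = bpZigzag i) → 18 ≤ m) ∧
    (∀ F ∈ BP3Faces, ∀ x ∈ F, ∀ y ∈ F, x ≠ y →
      ∃ i : ℤ, (bpZigzag i = x ∧ bpZigzag (i + 1) = y) ∨
        (bpZigzag i = y ∧ bpZigzag (i + 1) = x)) :=
  ⟨bpZigzag_isZigzag, bp3_isZigzag_iff, bpZigzag_periodic, fun _ => bpZigzag_period_le,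
    bpZigzag_covers_face_edges⟩
end

section
/- Every combinatorial tetrahedral chain contains at most 3 zigzags up to reversing, i.e., |𝒵(Θₙ)| ≤ 6 for every combinatorial tetrahedral chain Θₙ. -/
/-- The tetrahedron Θ₁ as a graph on ℕ: the complete graph on the vertices
0,1,2,3. -/
def tetraGraph : SimpleGraph ℕ := SimpleGraph.fromRel (fun x y => x < 4 ∧ y < 4)

/-- The four faces of the tetrahedron Θ₁. -/
def tetraFaces : Finset (Finset ℕ) := {{0, 1, 2}, {0, 1, 3}, {0, 2, 3}, {1, 2, 3}}

/-- `IsTetChain n G faces fresh` says that the triangulation with graph `G` and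
face set `faces` is a combinatorial tetrahedral chain of length `n`, where
`fresh` is the set of faces coming from the last glued tetrahedron (the faces
eligible for gluing the next tetrahedron).  Θ₁ is the tetrahedron, and Θ₊₁ is
obtained by gluing a tetrahedron along a fresh face F = {a,b,c}, i.e. by
subdividing F with the new vertex n+3 joined to a, b, c. -/
inductive IsTetChain : ℕ → SimpleGraph ℕ → Finset (Finset ℕ) → Finset (Finset ℕ) → Prop
  | base : IsTetChain 1 tetraGraph tetraFaces tetraFaces
  | step {n : ℕ} {G : SimpleGraph ℕ} {faces fresh : Finset (Finset ℕ)}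
      {F : Finset ℕ} {a b c : ℕ} :
      IsTetChain n G faces fresh → F ∈ fresh → F = {a, b, c} →
      a ≠ b → a ≠ c → b ≠ c →
      IsTetChain (n + 1)
        (G ⊔ SimpleGraph.fromRel (fun x y => x = n + 3 ∧ y ∈ F))
        ((faces.erase F) ∪ {{n + 3, a, b}, {n + 3, b, c}, {n + 3, a, c}})
        {{n + 3, a, b}, {n + 3, b, c}, {n + 3, a, c}}

/-!
A flag is a face `{x, y, z}` with an ordering `(x, y, z)` of its vertices.  The zigzag map sends
`(x, y, z)` to `(y, z, u)`, where `{y, z, u}` is the other face on the edge `yz`; it is a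
permutation of the flags, and since a zigzag is determined by three consecutive vertices, every
zigzag is read off the orbit of the flag formed by any three consecutive vertices.

Gluing a tetrahedron along a face `F` is the stellar subdivision of `F` by a new vertex `v`.  In
the tetrahedron every orbit passes through all four faces, and this propagates along the chain:
if every orbit passes through `F`, then after subdividing `F` an orbit follows the old one until
it reaches `F`, where it is diverted to `v`; and around the degree-three vertex `v` an orbit runs
through all three new faces.  So every orbit passes through each face of the last tetrahedron,
hence through one of the six flags of such a face, and there are at most six zigzags.
-/

open Finset

namespace Finset

variable {α : Type*} [DecidableEq α] {s : Finset α} {x y z : α}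

theorem eq_triple_of_card_eq_three (hs : #s = 3) (hx : x ∈ s) (hy : y ∈ s) (hz : z ∈ s)
    (hxy : x ≠ y) (hxz : x ≠ z) (hyz : y ≠ z) : s = {x, y, z} := by
  refine (eq_of_subset_of_card_le (by simp [insert_subset_iff, hx, hy, hz]) ?_).symm
  rw [hs, card_insert_of_notMem (by simp [hxy, hxz]), card_pair hyz]

theorem exists_eq_triple_of_card_eq_three (hs : #s = 3) (hy : y ∈ s) (hz : z ∈ s) (hyz : y ≠ z) :
    ∃ u, u ≠ y ∧ u ≠ z ∧ s = {y, z, u} := by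
  obtain ⟨u, hu⟩ : ∃ u, (s.erase y).erase z = {u} := by
    rw [← card_eq_one, card_erase_of_mem (mem_erase.2 ⟨hyz.symm, hz⟩), card_erase_of_mem hy, hs]
  have hu' : u ∈ (s.erase y).erase z := hu ▸ mem_singleton_self u
  obtain ⟨huz, huy, hus⟩ : u ≠ z ∧ u ≠ y ∧ u ∈ s := by simpa using hu'
  exact ⟨u, huy, huz, eq_triple_of_card_eq_three hs hy hz hus hyz huy.symm huz.symm⟩

end Finset

theorem Fin.exists_perm_three {i j k : Fin 3} (hij : i ≠ j) (hik : i ≠ k) (hjk : j ≠ k) :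
    ∃ σ : Equiv.Perm (Fin 3), σ 0 = i ∧ σ 1 = j ∧ σ 2 = k := by
  revert i j k
  decide

variable {V : Type*} [DecidableEq V] {faces : Finset (Finset V)} {F A : Finset V} {v : V}

structure IsTriangulation (faces : Finset (Finset V)) : Prop where
  card_eq_three : ∀ F ∈ faces, #F = 3
  card_filter_mem_mem : ∀ F ∈ faces, ∀ y ∈ F, ∀ z ∈ F, y ≠ z →
    #{A ∈ faces | y ∈ A ∧ z ∈ A} = 2

def IsFlag (faces : Finset (Finset V)) (x y z : V) : Prop :=
  x ≠ y ∧ x ≠ z ∧ y ≠ z ∧ {x, y, z} ∈ faces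

theorem IsFlag.reverse {x y z : V} (h : IsFlag faces x y z) : IsFlag faces z y x := by
  obtain ⟨hxy, hxz, hyz, hmem⟩ := h
  refine ⟨hyz.symm, hxz.symm, hxy.symm, ?_⟩
  rwa [insert_comm, pair_comm, insert_comm]

@[ext]
structure FaceFlag (faces : Finset (Finset V)) where
  fst : V
  snd : V
  thd : V
  isFlag : IsFlag faces fst snd thd

namespace FaceFlag

def face (t : FaceFlag faces) : Finset V := {t.fst, t.snd, t.thd}

theorem face_mem (t : FaceFlag faces) : t.face ∈ faces := t.isFlag.2.2.2

def reverse (t : FaceFlag faces) : FaceFlag faces := ⟨t.thd, t.snd, t.fst, t.isFlag.reverse⟩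

instance : Finite (FaceFlag faces) := by
  let U := faces.sup id
  have hU (t : FaceFlag faces) : t.fst ∈ U ∧ t.snd ∈ U ∧ t.thd ∈ U := by
    simpa only [id, face, insert_subset_iff, singleton_subset_iff] using le_sup (f := id) t.face_mem
  refine Finite.of_injective (fun t : FaceFlag faces =>
    ((⟨t.fst, (hU t).1⟩ : U), (⟨t.snd, (hU t).2.1⟩ : U), (⟨t.thd, (hU t).2.2⟩ : U))) ?_
  intro s t hst
  simp only [Prod.mk.injEq, Subtype.mk.injEq] at hst
  exact FaceFlag.ext hst.1 hst.2.1 hst.2.2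

end FaceFlag

namespace IsTriangulation

theorem existsUnique_opposite (hT : IsTriangulation faces) {x y z : V}
    (h : IsFlag faces x y z) : ∃! u, u ≠ x ∧ IsFlag faces y z u := by
  obtain ⟨hxy, hxz, hyz, hF⟩ := h
  obtain ⟨A, hA⟩ : ∃ A, {B ∈ faces | y ∈ B ∧ z ∈ B}.erase {x, y, z} = {A} := by
    rw [← card_eq_one, card_erase_of_mem (by simp [hF]),
      hT.card_filter_mem_mem _ hF y (by simp) z (by simp) hyz]
  have hother (B : Finset V) : B ≠ {x, y, z} ∧ B ∈ faces ∧ y ∈ B ∧ z ∈ B ↔ B = A := by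
    rw [← mem_singleton, ← hA, mem_erase, mem_filter]
  obtain ⟨hAne, hAfaces, hyA, hzA⟩ := (hother A).2 rfl
  obtain ⟨u, huy, huz, rfl⟩ :=
    exists_eq_triple_of_card_eq_three (hT.card_eq_three A hAfaces) hyA hzA hyz
  refine ⟨u, ⟨?_, hyz, huy.symm, huz.symm, hAfaces⟩, ?_⟩
  · rintro rfl
    exact hAne (by ext; simp only [mem_insert, mem_singleton]; tauto)
  · rintro u' ⟨hu'x, -, hyu', hzu', hu'⟩
    have hu'A := (hother {y, z, u'}).1 ⟨fun h => ?_, hu', by simp, by simp⟩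
    · have : u' ∈ ({y, z, u} : Finset V) := hu'A ▸ by simp
      simpa [hyu'.symm, hzu'.symm] using this
    · have : u' ∈ ({x, y, z} : Finset V) := h ▸ by simp
      simp [hu'x, hyu'.symm, hzu'.symm] at this

noncomputable def next (hT : IsTriangulation faces) (t : FaceFlag faces) : FaceFlag faces :=
  have h := (hT.existsUnique_opposite t.isFlag).exists
  ⟨t.snd, t.thd, h.choose, h.choose_spec.2⟩

theorem next_eq_iff (hT : IsTriangulation faces) {t s : FaceFlag faces} :
    hT.next t = s ↔ s.fst = t.snd ∧ s.snd = t.thd ∧ s.thd ≠ t.fst := by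
  have h := hT.existsUnique_opposite t.isFlag
  constructor
  · rintro rfl
    exact ⟨rfl, rfl, h.exists.choose_spec.1⟩
  · obtain ⟨s₁, s₂, s₃, hs⟩ := s
    rintro ⟨rfl, rfl, hs₃⟩
    ext
    · rfl
    · rfl
    · exact h.unique h.exists.choose_spec ⟨hs₃, hs⟩

theorem next_thd_ne (hT : IsTriangulation faces) (t : FaceFlag faces) :
    (hT.next t).thd ≠ t.fst :=
  (hT.next_eq_iff.1 rfl).2.2

noncomputable def zigzagPerm (hT : IsTriangulation faces) : Equiv.Perm (FaceFlag faces) where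
  toFun := hT.next
  invFun t := (hT.next t.reverse).reverse
  left_inv t := congrArg FaceFlag.reverse
    (hT.next_eq_iff.2 ⟨rfl, rfl, (hT.next_thd_ne t).symm⟩ : hT.next (hT.next t).reverse = t.reverse)
  right_inv t := hT.next_eq_iff.2 ⟨rfl, rfl, (hT.next_thd_ne t.reverse).symm⟩

theorem zigzagPerm_apply_eq_iff (hT : IsTriangulation faces) {t s : FaceFlag faces} :
    hT.zigzagPerm t = s ↔ s.fst = t.snd ∧ s.snd = t.thd ∧ s.thd ≠ t.fst :=
  hT.next_eq_iff

theorem zigzagPerm_inv_snd_thd (hT : IsTriangulation faces) (s : FaceFlag faces) :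
    (hT.zigzagPerm⁻¹ s).snd = s.fst ∧ (hT.zigzagPerm⁻¹ s).thd = s.snd := by
  obtain ⟨h₁, h₂, -⟩ := hT.zigzagPerm_apply_eq_iff.1 (Equiv.Perm.eq_inv_iff_eq.1 rfl)
  exact ⟨h₁.symm, h₂.symm⟩

theorem exists_sameCycle_thd_eq (hT : IsTriangulation faces) {s : FaceFlag faces} {v : V}
    (hv : v ∈ s.face) : ∃ s₀, hT.zigzagPerm.SameCycle s₀ s ∧ s₀.thd = v := by
  simp only [FaceFlag.face, mem_insert, mem_singleton] at hv
  rcases hv with rfl | rfl | rfl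
  · refine ⟨(hT.zigzagPerm ^ 2)⁻¹ s, ⟨2, by simp⟩, ?_⟩
    rw [pow_two, mul_inv_rev, Equiv.Perm.mul_apply, (hT.zigzagPerm_inv_snd_thd _).2,
      (hT.zigzagPerm_inv_snd_thd _).1]
  · exact ⟨hT.zigzagPerm⁻¹ s, ⟨1, by simp⟩, (hT.zigzagPerm_inv_snd_thd s).2⟩
  · exact ⟨s, .refl _ _, rfl⟩

noncomputable def zigzagOf (hT : IsTriangulation faces) (t : FaceFlag faces) : ℤ → V :=
  fun i => ((hT.zigzagPerm ^ i) t).fst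

def EveryOrbitMeets (hT : IsTriangulation faces) (F : Finset V) : Prop :=
  ∀ t : FaceFlag faces, ∃ s, hT.zigzagPerm.SameCycle t s ∧ s.face = F

end IsTriangulation

namespace IsZigzag

variable {G : SimpleGraph V} {z : ℤ → V}

theorem isFlag (hz : IsZigzag G faces z) (hT : IsTriangulation faces) (i : ℤ) :
    IsFlag faces (z i) (z (i + 1)) (z (i + 2)) := by
  obtain ⟨hadj, hne, ⟨F, hF, h₀, h₁, h₂⟩, -⟩ := hz i
  have hne' : z (i + 1) ≠ z (i + 2) := by
    simpa [add_assoc] using (hz (i + 1)).1.ne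
  refine ⟨hadj.ne, hne, hne', ?_⟩
  rwa [← eq_triple_of_card_eq_three (hT.card_eq_three F hF) h₀ h₁ h₂ hadj.ne hne hne']

def flag (hz : IsZigzag G faces z) (hT : IsTriangulation faces) (i : ℤ) : FaceFlag faces :=
  ⟨z i, z (i + 1), z (i + 2), hz.isFlag hT i⟩

theorem zigzagPerm_flag (hz : IsZigzag G faces z) (hT : IsTriangulation faces) (i : ℤ) :
    hT.zigzagPerm (hz.flag hT i) = hz.flag hT (i + 1) := by
  refine hT.zigzagPerm_apply_eq_iff.2 ⟨rfl, by simp [flag, add_assoc], ?_⟩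
  intro h
  simp only [flag, add_assoc] at h
  norm_num at h
  exact Set.eq_empty_iff_forall_notMem.1 (hz i).2.2.2.2 (z i) ⟨by simp, by simp [h]⟩

theorem zigzagPerm_zpow_flag (hz : IsZigzag G faces z) (hT : IsTriangulation faces) (i k : ℤ) :
    (hT.zigzagPerm ^ k) (hz.flag hT i) = hz.flag hT (i + k) := by
  induction k using Int.induction_on generalizing i with
  | zero => simp
  | succ k ih =>
    rw [zpow_add_one, Equiv.Perm.mul_apply, hz.zigzagPerm_flag, ih, add_right_comm, add_assoc]
  | pred k ih =>
    have hinv : hT.zigzagPerm⁻¹ (hz.flag hT i) = hz.flag hT (i - 1) := by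
      rw [Equiv.Perm.inv_eq_iff_eq, hz.zigzagPerm_flag, sub_add_cancel]
    rw [zpow_sub_one, Equiv.Perm.mul_apply, hinv, ih, sub_add_eq_add_sub, add_sub_assoc]

theorem exists_eq_zigzagOf (hz : IsZigzag G faces z) (hT : IsTriangulation faces)
    {t : FaceFlag faces} (h : hT.zigzagPerm.SameCycle t (hz.flag hT 0)) :
    ∃ k : ℤ, z = fun i => hT.zigzagOf t (i + k) := by
  obtain ⟨k, hk⟩ := h
  refine ⟨k, funext fun i => ?_⟩
  rw [IsTriangulation.zigzagOf, zpow_add, Equiv.Perm.mul_apply, hk, hz.zigzagPerm_zpow_flag,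
    zero_add]
  rfl

end IsZigzag

namespace IsTriangulation

theorem exists_flag_cover_of_face (hT : IsTriangulation faces) (hF : F ∈ faces) :
    ∃ T : Fin 6 → FaceFlag faces, ∀ s : FaceFlag faces, s.face = F → ∃ j, T j = s := by
  have hF3 := hT.card_eq_three F hF
  let e : Fin 3 ≃ F := (F.equivFinOfCardEq hF3).symm
  have he {i j : Fin 3} (σ : Equiv.Perm (Fin 3)) (hij : i ≠ j) : (e (σ i) : V) ≠ e (σ j) :=
    fun h => hij (σ.injective (e.injective (Subtype.ext h)))
  have hflag (σ : Equiv.Perm (Fin 3)) : IsFlag faces (e (σ 0)) (e (σ 1)) (e (σ 2)) := by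
    have h₀₁ := he σ (by decide : (0 : Fin 3) ≠ 1)
    have h₀₂ := he σ (by decide : (0 : Fin 3) ≠ 2)
    have h₁₂ := he σ (by decide : (1 : Fin 3) ≠ 2)
    exact ⟨h₀₁, h₀₂, h₁₂, eq_triple_of_card_eq_three hF3 (e _).2 (e _).2 (e _).2 h₀₁ h₀₂ h₁₂ ▸ hF⟩
  have hcard : Fintype.card (Equiv.Perm (Fin 3)) = 6 := by
    rw [Fintype.card_perm, Fintype.card_fin]; rfl
  let σ := (Fintype.equivFinOfCardEq hcard).symm
  refine ⟨fun j => ⟨_, _, _, hflag (σ j)⟩, fun s hs => ?_⟩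
  obtain ⟨hxy, hxz, hyz, -⟩ := s.isFlag
  have hmem : s.fst ∈ F ∧ s.snd ∈ F ∧ s.thd ∈ F := by simp [← hs, FaceFlag.face]
  have he' {x y : V} (hx : x ∈ F) (hy : y ∈ F) (hne : x ≠ y) : e.symm ⟨x, hx⟩ ≠ e.symm ⟨y, hy⟩ :=
    fun h => hne (congrArg Subtype.val (e.symm.injective h))
  obtain ⟨τ, h₀, h₁, h₂⟩ := Fin.exists_perm_three (he' hmem.1 hmem.2.1 hxy)
    (he' hmem.1 hmem.2.2 hxz) (he' hmem.2.1 hmem.2.2 hyz)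
  refine ⟨σ.symm τ, ?_⟩
  ext <;> simp [h₀, h₁, h₂]

theorem exists_six_zigzags (hT : IsTriangulation faces) (hF : F ∈ faces)
    (hmeet : hT.EveryOrbitMeets F) {G : SimpleGraph V} :
    ∃ w : Fin 6 → ℤ → V, ∀ z : ℤ → V, IsZigzag G faces z →
      ∃ j : Fin 6, ∃ k : ℤ, z = fun i => w j (i + k) := by
  obtain ⟨T, hT_cover⟩ := hT.exists_flag_cover_of_face hF
  refine ⟨fun j => hT.zigzagOf (T j), fun z hz => ?_⟩
  obtain ⟨s, hs, hsF⟩ := hmeet (hz.flag hT 0)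
  obtain ⟨j, rfl⟩ := hT_cover s hsF
  exact ⟨j, hz.exists_eq_zigzagOf hT hs.symm⟩

end IsTriangulation

def stellarFaces (F : Finset V) (v : V) : Finset (Finset V) :=
  F.image fun w => insert v (F.erase w)

def stellarSubdivision (faces : Finset (Finset V)) (F : Finset V) (v : V) :
    Finset (Finset V) :=
  faces.erase F ∪ stellarFaces F v

theorem mem_stellarSubdivision :
    A ∈ stellarSubdivision faces F v ↔ (A ≠ F ∧ A ∈ faces) ∨ A ∈ stellarFaces F v := by
  simp [stellarSubdivision]

theorem apex_mem_of_mem_stellarFaces (hA : A ∈ stellarFaces F v) : v ∈ A := by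
  obtain ⟨w, -, rfl⟩ := mem_image.1 hA
  exact mem_insert_self v _

theorem mem_of_mem_stellarFaces (hA : A ∈ stellarFaces F v) {x : V} (hx : x ∈ A) (hxv : x ≠ v) :
    x ∈ F := by
  obtain ⟨w, -, rfl⟩ := mem_image.1 hA
  exact mem_of_mem_erase ((mem_insert.1 hx).resolve_left hxv)

theorem eq_insert_erase_of_notMem (hA : A ∈ stellarFaces F v) {w : V} (hw : w ∈ F)
    (hwA : w ∉ A) : A = insert v (F.erase w) := by
  obtain ⟨w', -, rfl⟩ := mem_image.1 hA
  obtain rfl : w = w' := by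
    by_contra h
    exact hwA (mem_insert_of_mem (mem_erase.2 ⟨h, hw⟩))
  rfl

theorem mem_of_mem_stellarSubdivision (hA : A ∈ stellarSubdivision faces F v) (hvA : v ∉ A) :
    A ≠ F ∧ A ∈ faces :=
  (mem_stellarSubdivision.1 hA).resolve_right fun h => hvA (apex_mem_of_mem_stellarFaces h)

theorem injOn_insert_erase (hvF : v ∉ F) : Set.InjOn (fun w => insert v (F.erase w)) F := by
  intro w₁ hw₁ w₂ _ h
  by_contra hne
  have : w₁ ∈ insert v (F.erase w₂) := mem_insert_of_mem (mem_erase.2 ⟨hne, hw₁⟩)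
  simp only at h
  rw [← h, mem_insert, mem_erase] at this
  exact this.elim (fun h => hvF (h ▸ hw₁)) fun h => h.1 rfl

theorem card_filter_stellarFaces (hvF : v ∉ F) (p : Finset V → Prop) [DecidablePred p] :
    #{A ∈ stellarFaces F v | p A} = #{w ∈ F | p (insert v (F.erase w))} := by
  rw [stellarFaces, filter_image,
    card_image_of_injOn ((injOn_insert_erase hvF).mono (coe_subset.2 (filter_subset _ _)))]

theorem card_filter_stellarSubdivision (hv : ∀ A ∈ faces, v ∉ A) (hvF : v ∉ F) (y z : V) :
    #{A ∈ stellarSubdivision faces F v | y ∈ A ∧ z ∈ A} =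
      #({A ∈ faces | y ∈ A ∧ z ∈ A}.erase F) +
        #{w ∈ F | y ∈ insert v (F.erase w) ∧ z ∈ insert v (F.erase w)} := by
  rw [stellarSubdivision, filter_union, card_union_of_disjoint, filter_erase,
    card_filter_stellarFaces hvF]
  refine disjoint_filter_filter (disjoint_left.2 fun A hA hA' => ?_)
  exact hv A (mem_of_mem_erase hA) (apex_mem_of_mem_stellarFaces hA')

namespace IsTriangulation

theorem card_filter_stellarSubdivision_apex (hT : IsTriangulation faces) (hF : F ∈ faces)
    (hv : ∀ A ∈ faces, v ∉ A) {z : V} (hz : z ∈ F) :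
    #{A ∈ stellarSubdivision faces F v | v ∈ A ∧ z ∈ A} = 2 := by
  have hzv : z ≠ v := fun h => hv F hF (h ▸ hz)
  rw [card_filter_stellarSubdivision hv (hv F hF), filter_false_of_mem fun A hA h => hv A hA h.1]
  simp only [erase_empty, card_empty, zero_add, mem_insert_self, true_and, mem_insert, hzv,
    mem_erase, false_or, hz, and_true]
  rw [filter_congr fun w _ => ne_comm, filter_ne', card_erase_of_mem hz, hT.card_eq_three F hF]

theorem card_filter_stellarSubdivision_of_ne (hT : IsTriangulation faces) (hF : F ∈ faces)
    (hv : ∀ A ∈ faces, v ∉ A) {y z : V} (hyv : y ≠ v) (hzv : z ≠ v) (hyz : y ≠ z) :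
    #{A ∈ stellarSubdivision faces F v | y ∈ A ∧ z ∈ A} = #{A ∈ faces | y ∈ A ∧ z ∈ A} := by
  rw [card_filter_stellarSubdivision hv (hv F hF)]
  simp only [mem_insert, hyv, hzv, mem_erase, false_or]
  by_cases hyzF : y ∈ F ∧ z ∈ F
  · have hFmem : F ∈ {A ∈ faces | y ∈ A ∧ z ∈ A} := mem_filter.2 ⟨hF, hyzF⟩
    have hnew : {w ∈ F | (y ≠ w ∧ y ∈ F) ∧ z ≠ w ∧ z ∈ F} = (F.erase y).erase z := by
      ext w; simp only [mem_filter, mem_erase]; tauto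
    rw [card_erase_of_mem hFmem, hnew, card_erase_of_mem (mem_erase.2 ⟨hyz.symm, hyzF.2⟩),
      card_erase_of_mem hyzF.1, hT.card_eq_three F hF,
      hT.card_filter_mem_mem F hF y hyzF.1 z hyzF.2 hyz]
  · have hFnot : F ∉ {A ∈ faces | y ∈ A ∧ z ∈ A} := fun h => hyzF (mem_filter.1 h).2
    have hnew : {w ∈ F | (y ≠ w ∧ y ∈ F) ∧ z ≠ w ∧ z ∈ F} = ∅ :=
      filter_false_of_mem fun w _ h => hyzF ⟨h.1.2, h.2.2⟩
    rw [erase_eq_of_notMem hFnot, hnew, card_empty, add_zero]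

end IsTriangulation

theorem isTriangulation_stellarSubdivision (hT : IsTriangulation faces) (hF : F ∈ faces)
    (hv : ∀ A ∈ faces, v ∉ A) : IsTriangulation (stellarSubdivision faces F v) := by
  have hvF : v ∉ F := hv F hF
  refine ⟨fun A hA => ?_, fun X hX y hy z hz hyz => ?_⟩
  · rcases mem_stellarSubdivision.1 hA with ⟨-, hA⟩ | hA
    · exact hT.card_eq_three A hA
    · obtain ⟨w, hw, rfl⟩ := mem_image.1 hA
      rw [card_insert_of_notMem fun h => hvF (mem_of_mem_erase h), card_erase_of_mem hw,
        hT.card_eq_three F hF]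
  · have hmemF : ∀ x ∈ X, x ≠ v → v ∈ X → x ∈ F := fun x hx hxv hvX =>
      mem_of_mem_stellarFaces ((mem_stellarSubdivision.1 hX).resolve_left
        fun h => hv X h.2 hvX) hx hxv
    by_cases hyv : y = v
    · subst hyv
      exact hT.card_filter_stellarSubdivision_apex hF hv (hmemF z hz (Ne.symm hyz) hy)
    by_cases hzv : z = v
    · subst hzv
      simp_rw [and_comm (a := y ∈ _)]
      exact hT.card_filter_stellarSubdivision_apex hF hv (hmemF y hy hyz hz)
    rw [hT.card_filter_stellarSubdivision_of_ne hF hv hyv hzv hyz]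
    by_cases hvX : v ∈ X
    · exact hT.card_filter_mem_mem F hF y (hmemF y hy hyv hvX) z (hmemF z hz hzv hvX) hyz
    · exact hT.card_filter_mem_mem X (mem_of_mem_stellarSubdivision hX hvX).2 y hy z hz hyz

namespace FaceFlag

def ofStellarSubdivision (t : FaceFlag (stellarSubdivision faces F v)) (ht : v ∉ t.face) :
    FaceFlag faces :=
  ⟨t.fst, t.snd, t.thd, t.isFlag.1, t.isFlag.2.1, t.isFlag.2.2.1,
    (mem_of_mem_stellarSubdivision t.face_mem ht).2⟩

theorem face_ne_of_apex_notMem (t : FaceFlag (stellarSubdivision faces F v)) (ht : v ∉ t.face) :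
    t.face ≠ F :=
  (mem_of_mem_stellarSubdivision t.face_mem ht).1

end FaceFlag

namespace IsTriangulation

theorem zigzagPerm_ofStellarSubdivision (hT : IsTriangulation faces)
    (hT' : IsTriangulation (stellarSubdivision faces F v))
    (t : FaceFlag (stellarSubdivision faces F v)) (ht : v ∉ t.face)
    (ht' : v ∉ (hT'.zigzagPerm t).face) :
    hT.zigzagPerm (t.ofStellarSubdivision ht) = (hT'.zigzagPerm t).ofStellarSubdivision ht' :=
  hT.zigzagPerm_apply_eq_iff.2 (hT'.zigzagPerm_apply_eq_iff.1 rfl)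

theorem exists_sameCycle_apex_of_pow (hT : IsTriangulation faces)
    (hT' : IsTriangulation (stellarSubdivision faces F v)) (k : ℕ) :
    ∀ (t : FaceFlag (stellarSubdivision faces F v)) (ht : v ∉ t.face),
      ((hT.zigzagPerm ^ k) (t.ofStellarSubdivision ht)).face = F →
        ∃ s, hT'.zigzagPerm.SameCycle t s ∧ v ∈ s.face := by
  induction k with
  | zero => exact fun t ht h => absurd h (t.face_ne_of_apex_notMem ht)
  | succ k ih =>
    intro t ht h
    by_cases ht' : v ∈ (hT'.zigzagPerm t).face
    · exact ⟨_, ⟨1, by simp⟩, ht'⟩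
    · rw [pow_succ, Equiv.Perm.mul_apply, hT.zigzagPerm_ofStellarSubdivision hT' t ht ht'] at h
      obtain ⟨s, hs, hvs⟩ := ih _ ht' h
      exact ⟨s, Equiv.Perm.sameCycle_apply_left.1 hs, hvs⟩

theorem exists_sameCycle_apex (hT : IsTriangulation faces)
    (hT' : IsTriangulation (stellarSubdivision faces F v)) (hmeet : hT.EveryOrbitMeets F)
    (t : FaceFlag (stellarSubdivision faces F v)) :
    ∃ s, hT'.zigzagPerm.SameCycle t s ∧ v ∈ s.face := by
  by_cases ht : v ∈ t.face
  · exact ⟨t, .refl _ _, ht⟩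
  obtain ⟨s, hs, hsF⟩ := hmeet (t.ofStellarSubdivision ht)
  obtain ⟨k, rfl⟩ := hs.exists_nat_pow_eq
  exact hT.exists_sameCycle_apex_of_pow hT' k t ht hsF

theorem exists_sameCycle_face_eq_of_apex_mem (hv : ∀ A ∈ faces, v ∉ A) (hF : F ∈ faces)
    (hT' : IsTriangulation (stellarSubdivision faces F v))
    {s : FaceFlag (stellarSubdivision faces F v)} (hs : v ∈ s.face) {w : V} (hw : w ∈ F) :
    ∃ s', hT'.zigzagPerm.SameCycle s s' ∧ s'.face = insert v (F.erase w) := by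
  have hwv : w ≠ v := fun h => hv F hF (h ▸ hw)
  suffices ∃ s', hT'.zigzagPerm.SameCycle s s' ∧ v ∈ s'.face ∧ w ∉ s'.face by
    obtain ⟨s', hss', hvs', hws'⟩ := this
    refine ⟨s', hss', eq_insert_erase_of_notMem ?_ hw hws'⟩
    exact (mem_stellarSubdivision.1 s'.face_mem).resolve_left fun h => hv _ h.2 hvs'
  obtain ⟨s₀, hs₀, hs₀v⟩ := hT'.exists_sameCycle_thd_eq hs
  obtain ⟨s₁, h₀₁⟩ : ∃ s₁, hT'.zigzagPerm s₀ = s₁ := ⟨_, rfl⟩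
  obtain ⟨s₂, h₁₂⟩ : ∃ s₂, hT'.zigzagPerm s₁ = s₂ := ⟨_, rfl⟩
  have hs₁ : hT'.zigzagPerm.SameCycle s s₁ := hs₀.symm.trans ⟨1, by rw [zpow_one, h₀₁]⟩
  have hs₂ : hT'.zigzagPerm.SameCycle s s₂ :=
    hs₀.symm.trans ⟨2, by rw [zpow_two, Equiv.Perm.mul_apply, h₀₁, h₁₂]⟩
  obtain ⟨hs₁₀, hs₁₁, hs₁₂⟩ := hT'.zigzagPerm_apply_eq_iff.1 h₀₁
  obtain ⟨hs₂₀, hs₂₁, hs₂₂⟩ := hT'.zigzagPerm_apply_eq_iff.1 h₁₂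
  simp only [FaceFlag.face, mem_insert, mem_singleton, not_or]
  -- `s₀ = (x, y, v)`, `s₁ = (y, v, r)` and `s₂ = (v, r, x')` with `r ≠ x`, `x' ≠ y`; if `w` is
  -- neither `x` nor `y` then `s₀` misses it, if `w = x` then `s₁` does, and if `w = y` then `s₂`.
  have := s₀.isFlag.1
  have := s₁.isFlag.2.1
  by_cases hw₀ : w = s₀.fst
  · exact ⟨s₁, hs₁, by grind⟩
  by_cases hw₁ : w = s₀.snd
  · exact ⟨s₂, hs₂, by grind⟩
  · exact ⟨s₀, hs₀.symm, by grind⟩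

theorem everyOrbitMeets_stellarSubdivision (hT : IsTriangulation faces) (hF : F ∈ faces)
    (hv : ∀ A ∈ faces, v ∉ A) (hmeet : hT.EveryOrbitMeets F) :
    ∀ N ∈ stellarFaces F v, (isTriangulation_stellarSubdivision hT hF hv).EveryOrbitMeets N := by
  intro N hN t
  obtain ⟨w, hw, rfl⟩ := mem_image.1 hN
  obtain ⟨s, hts, hs⟩ := hT.exists_sameCycle_apex _ hmeet t
  obtain ⟨s', hss', hs'⟩ := exists_sameCycle_face_eq_of_apex_mem hv hF _ hs hw
  exact ⟨s', hts.trans hss', hs'⟩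

end IsTriangulation

theorem stellarFaces_triple {a b c : V} (v : V) (hab : a ≠ b) (hac : a ≠ c) (hbc : b ≠ c) :
    stellarFaces {a, b, c} v = {{v, a, b}, {v, b, c}, {v, a, c}} := by
  simp only [stellarFaces, image_insert, image_singleton, erase_insert_eq_erase,
    erase_insert_of_ne, erase_eq_of_notMem, erase_singleton, insert_empty_eq, mem_insert,
    mem_singleton, ne_eq, hab, hac, hbc, or_self, not_false_eq_true]
  ext A
  simp only [mem_insert, mem_singleton]
  tauto

theorem isTriangulation_tetraFaces : IsTriangulation tetraFaces := ⟨by decide, by decide⟩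

theorem tetraFaces_subset_range : ∀ A ∈ tetraFaces, A ⊆ range 4 := by decide

theorem exists_fourth_vertex_tetraFaces :
    ∀ x ∈ range 4, ∀ y ∈ range 4, ∀ z ∈ range 4, x ≠ y → x ≠ z → y ≠ z →
      ∃ w ∈ range 4, w ≠ x ∧ w ≠ y ∧ w ≠ z ∧
        {y, z, w} ∈ tetraFaces ∧ {z, w, x} ∈ tetraFaces ∧ {w, x, y} ∈ tetraFaces ∧
        ∀ F ∈ tetraFaces, F = {x, y, z} ∨ F = {y, z, w} ∨ F = {z, w, x} ∨ F = {w, x, y} := by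
  decide

theorem everyOrbitMeets_tetraFaces :
    ∀ F ∈ tetraFaces, isTriangulation_tetraFaces.EveryOrbitMeets F := by
  rintro F hF ⟨x, y, z, hxy, hxz, hyz, hmem⟩
  have hx := tetraFaces_subset_range _ hmem (mem_insert_self x _)
  have hy := tetraFaces_subset_range _ hmem (by simp : y ∈ ({x, y, z} : Finset ℕ))
  have hz := tetraFaces_subset_range _ hmem (by simp : z ∈ ({x, y, z} : Finset ℕ))
  obtain ⟨w, -, hwx, hwy, hwz, h₁, h₂, h₃, hfaces⟩ :=
    exists_fourth_vertex_tetraFaces x hx y hy z hz hxy hxz hyz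
  set E := isTriangulation_tetraFaces.zigzagPerm
  let t₀ : FaceFlag tetraFaces := ⟨x, y, z, hxy, hxz, hyz, hmem⟩
  let t₁ : FaceFlag tetraFaces := ⟨y, z, w, hyz, hwy.symm, hwz.symm, h₁⟩
  let t₂ : FaceFlag tetraFaces := ⟨z, w, x, hwz.symm, hxz.symm, hwx, h₂⟩
  let t₃ : FaceFlag tetraFaces := ⟨w, x, y, hwx, hwy, hxy, h₃⟩
  have h₀₁ : E t₀ = t₁ := isTriangulation_tetraFaces.zigzagPerm_apply_eq_iff.2 ⟨rfl, rfl, hwx⟩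
  have h₁₂ : E t₁ = t₂ := isTriangulation_tetraFaces.zigzagPerm_apply_eq_iff.2 ⟨rfl, rfl, hxy⟩
  have h₂₃ : E t₂ = t₃ := isTriangulation_tetraFaces.zigzagPerm_apply_eq_iff.2 ⟨rfl, rfl, hyz⟩
  have hc₁ : E.SameCycle t₀ t₁ := h₀₁ ▸ Equiv.Perm.sameCycle_apply_right.2 (.refl _ _)
  have hc₂ : E.SameCycle t₀ t₂ := h₁₂ ▸ Equiv.Perm.sameCycle_apply_right.2 hc₁
  have hc₃ : E.SameCycle t₀ t₃ := h₂₃ ▸ Equiv.Perm.sameCycle_apply_right.2 hc₂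
  rcases hfaces F hF with rfl | rfl | rfl | rfl
  exacts [⟨t₀, .refl _ _, rfl⟩, ⟨t₁, hc₁, rfl⟩, ⟨t₂, hc₂, rfl⟩, ⟨t₃, hc₃, rfl⟩]

theorem IsTetChain.everyOrbitMeets_fresh {n : ℕ} {G : SimpleGraph ℕ} {faces fresh : Finset (Finset ℕ)}
    (h : IsTetChain n G faces fresh) :
    (∀ A ∈ faces, ∀ x ∈ A, x < n + 3) ∧ fresh ⊆ faces ∧ fresh.Nonempty ∧
      ∃ hT : IsTriangulation faces, ∀ F ∈ fresh, hT.EveryOrbitMeets F := by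
  induction h with
  | base =>
    exact ⟨by decide, subset_rfl, by decide, isTriangulation_tetraFaces,
      everyOrbitMeets_tetraFaces⟩
  | @step n G faces fresh F a b c _ hF hFabc hab hac hbc ih =>
    obtain ⟨hbound, hfresh, -, hT, hmeet⟩ := ih
    subst hFabc
    have hv : ∀ A ∈ faces, n + 3 ∉ A := fun A hA hA' => (hbound A hA _ hA').false
    rw [← stellarFaces_triple (n + 3) hab hac hbc]
    refine ⟨fun A hA x hx => ?_, subset_union_right, (insert_nonempty _ _).image _,
      isTriangulation_stellarSubdivision hT (hfresh hF) hv,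
      hT.everyOrbitMeets_stellarSubdivision (hfresh hF) hv (hmeet _ hF)⟩
    rcases mem_union.1 hA with hA | hA
    · exact (hbound A (mem_of_mem_erase hA) x hx).trans (by omega)
    · by_cases hxv : x = n + 3
      · omega
      · exact (hbound _ (hfresh hF) x (mem_of_mem_stellarFaces hA hx hxv)).trans (by omega)

/-- Every combinatorial tetrahedral chain contains at most 3 zigzags up to
reversing, i.e. at most 6 zigzags: there are six vertex sequences such that
every zigzag is a shift of one of them. -/
theorem tet_chain_at_most_six_zigzags {n : ℕ} {G : SimpleGraph ℕ}
    {faces fresh : Finset (Finset ℕ)} (h : IsTetChain n G faces fresh) :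
    ∃ w : Fin 6 → (ℤ → ℕ), ∀ z : ℤ → ℕ, IsZigzag G faces z →
      ∃ j : Fin 6, ∃ k : ℤ, z = fun i => w j (i + k) := by
  obtain ⟨-, hfresh, ⟨F, hF⟩, hT, hmeet⟩ := h.everyOrbitMeets_fresh
  exact hT.exists_six_zigzags (hfresh hF) (hmeet F hF)
end

section
/- For any starting state i ∈ {1,...,7}, lim_{n→∞} ∑_{j∈{1,2,3,4}} (P^n)_{ij} = 8/15, lim_{n→∞} ∑_{j∈{6,7}} (P^n)_{ij} = 2/5, and lim_{n→∞} (P^n)_{i5} = 1/15. -/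
open Filter

/-- The stationary distribution of `P`. -/
noncomputable def pv : Fin 7 → ℝ := ![1/15, 1/15, 1/5, 1/5, 1/15, 1/5, 1/5]

lemma P_nonneg : ∀ k j, 0 ≤ P k j := by
  intro k j; fin_cases k <;> fin_cases j <;> norm_num [P]

lemma P_row : ∀ k, ∑ j, P k j = 1 := by
  intro k; fin_cases k <;> norm_num [P, Fin.sum_univ_succ]

lemma pv_sum : ∑ k, pv k = 1 := by norm_num [pv, Fin.sum_univ_succ]

lemma pv_stat : ∀ j, ∑ k, pv k * P k j = pv j := by
  intro j; fin_cases j <;> norm_num [P, pv, Fin.sum_univ_succ]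

lemma P2_eq : P * P = !![1/3,0,2/3,0,0,0,0;
  0,0,1,0,0,0,0;
  0,1/9,0,2/9,0,4/9,2/9;
  0,0,0,1/3,0,2/9,4/9;
  0,0,0,0,0,1/3,2/3;
  2/9,0,4/9,0,1/3,0,0;
  0,2/9,0,4/9,0,2/9,1/9] := by
  ext k j; fin_cases k <;> fin_cases j <;>
    norm_num [P, Matrix.mul_apply, Fin.sum_univ_succ]

set_option maxHeartbeats 2000000 in
lemma P4_eq : P ^ 4 = !![1/9,2/27,2/9,4/27,0,8/27,4/27;
  0,1/9,0,2/9,0,4/9,2/9;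
  8/81,4/81,25/81,14/81,4/27,8/81,10/81;
  4/81,8/81,8/81,25/81,2/27,14/81,16/81;
  2/27,4/27,4/27,8/27,1/9,4/27,2/27;
  2/27,4/81,4/27,8/81,0,25/81,26/81;
  4/81,2/81,26/81,16/81,2/27,10/81,17/81] := by
  have h : P ^ 4 = (P * P) * (P * P) := by
    rw [show (4:ℕ) = 2 + 2 from rfl, pow_add, pow_two]
  rw [h, P2_eq]
  ext k j; fin_cases k <;> fin_cases j <;>
    norm_num [Matrix.mul_apply, Fin.sum_univ_succ]

lemma pv_stat4 : ∀ j, ∑ k, pv k * (P ^ 4) k j = pv j := by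
  intro j; rw [P4_eq]; fin_cases j <;> norm_num [pv, Fin.sum_univ_succ]

lemma contract_row : ∀ k, ∑ j, |(P ^ 4) k j - pv j| ≤ 2/3 := by
  intro k; rw [P4_eq]; fin_cases k <;>
    norm_num [pv, Fin.sum_univ_succ, abs_of_nonneg, abs_of_nonpos]

lemma entry_tendsto (i j : Fin 7) :
    Tendsto (fun n : ℕ => (P ^ n) i j) atTop (nhds (pv j)) := by
  -- the ℓ¹ distance of the n-step distribution from the stationary one
  set s : ℕ → ℝ := fun n => ∑ k, |(P ^ n) i k - pv k| with hs_def
  have hrow_sum : ∀ n, ∑ k, (P ^ n) i k = 1 := by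
    intro n
    induction n with
    | zero => simp [Matrix.one_apply]
    | succ n ih =>
      have h1 : ∀ j, (P ^ (n+1)) i j = ∑ k, (P ^ n) i k * P k j := by
        intro j; rw [pow_succ, Matrix.mul_apply]
      calc ∑ j, (P ^ (n+1)) i j = ∑ j, ∑ k, (P ^ n) i k * P k j := by
            exact Finset.sum_congr rfl fun j _ => h1 j
        _ = ∑ k, (P ^ n) i k * ∑ j, P k j := by
            rw [Finset.sum_comm]; simp [Finset.mul_sum]
        _ = 1 := by simp [P_row, ih]
  have hzero : ∀ n, ∑ k, ((P ^ n) i k - pv k) = 0 := by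
    intro n; rw [Finset.sum_sub_distrib, hrow_sum, pv_sum]; ring
  -- one-step identity
  have key1 : ∀ n j, (P ^ (n+1)) i j - pv j
      = ∑ k, ((P ^ n) i k - pv k) * P k j := by
    intro n j
    have h1 : (P ^ (n+1)) i j = ∑ k, (P ^ n) i k * P k j := by
      rw [pow_succ, Matrix.mul_apply]
    calc (P ^ (n+1)) i j - pv j
        = (∑ k, (P ^ n) i k * P k j) - ∑ k, pv k * P k j := by
          rw [h1, pv_stat]
      _ = ∑ k, ((P ^ n) i k - pv k) * P k j := by
          rw [← Finset.sum_sub_distrib]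
          exact Finset.sum_congr rfl fun k _ => by ring
  -- four-step identity
  have key4 : ∀ n j, (P ^ (n+4)) i j - pv j
      = ∑ k, ((P ^ n) i k - pv k) * ((P ^ 4) k j - pv j) := by
    intro n j
    have h1 : (P ^ (n+4)) i j = ∑ k, (P ^ n) i k * (P ^ 4) k j := by
      rw [pow_add, Matrix.mul_apply]
    have expand : ∀ k : Fin 7, ((P ^ n) i k - pv k) * ((P ^ 4) k j - pv j)
        = (P ^ n) i k * (P ^ 4) k j - pv k * (P ^ 4) k j
          - ((P ^ n) i k - pv k) * pv j := by intro k; ring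
    calc (P ^ (n+4)) i j - pv j
        = (∑ k, (P ^ n) i k * (P ^ 4) k j) - (∑ k, pv k * (P ^ 4) k j)
            - (∑ k, ((P ^ n) i k - pv k)) * pv j := by
          rw [h1, pv_stat4, hzero]; ring
      _ = ∑ k, ((P ^ n) i k - pv k) * ((P ^ 4) k j - pv j) := by
          rw [Finset.sum_mul, ← Finset.sum_sub_distrib, ← Finset.sum_sub_distrib]
          exact Finset.sum_congr rfl fun k _ => (expand k).symm
  -- monotonicity of s
  have hmono : ∀ n, s (n+1) ≤ s n := by
    intro n
    calc s (n+1) = ∑ j, |∑ k, ((P ^ n) i k - pv k) * P k j| := by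
          simp only [hs_def]
          exact Finset.sum_congr rfl fun j _ => by rw [key1]
      _ ≤ ∑ j, ∑ k, |(P ^ n) i k - pv k| * P k j := by
          refine Finset.sum_le_sum fun j _ => ?_
          refine (Finset.abs_sum_le_sum_abs _ _).trans (le_of_eq ?_)
          exact Finset.sum_congr rfl fun k _ => by
            rw [abs_mul, abs_of_nonneg (P_nonneg k j)]
      _ = ∑ k, |(P ^ n) i k - pv k| * ∑ j, P k j := by
          rw [Finset.sum_comm]; simp [Finset.mul_sum]
      _ = s n := by simp [hs_def, P_row]
  -- contraction of s over four steps
  have hcontract : ∀ n, s (n+4) ≤ 2/3 * s n := by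
    intro n
    calc s (n+4) = ∑ j, |∑ k, ((P ^ n) i k - pv k) * ((P ^ 4) k j - pv j)| := by
          simp only [hs_def]
          exact Finset.sum_congr rfl fun j _ => by rw [key4]
      _ ≤ ∑ j, ∑ k, |(P ^ n) i k - pv k| * |(P ^ 4) k j - pv j| := by
          refine Finset.sum_le_sum fun j _ => ?_
          refine (Finset.abs_sum_le_sum_abs _ _).trans (le_of_eq ?_)
          exact Finset.sum_congr rfl fun k _ => abs_mul _ _
      _ = ∑ k, |(P ^ n) i k - pv k| * ∑ j, |(P ^ 4) k j - pv j| := by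
          rw [Finset.sum_comm]; simp [Finset.mul_sum]
      _ ≤ ∑ k, |(P ^ n) i k - pv k| * (2/3) := by
          refine Finset.sum_le_sum fun k _ => ?_
          exact mul_le_mul_of_nonneg_left (contract_row k) (abs_nonneg _)
      _ = 2/3 * s n := by rw [← Finset.sum_mul, hs_def]; ring
  have hs0 : ∀ n, s n ≤ s 0 := by
    intro n
    induction n with
    | zero => exact le_refl _
    | succ n ih => exact (hmono n).trans ih
  have hs_le : ∀ n, s n ≤ (2/3:ℝ) ^ (n / 4) * s 0 := by
    intro n
    induction n using Nat.strong_induction_on with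
    | _ n ih =>
      rcases lt_or_ge n 4 with h | h
      · rw [Nat.div_eq_of_lt h, pow_zero, one_mul]; exact hs0 n
      · obtain ⟨m, rfl⟩ : ∃ m, n = m + 4 := ⟨n - 4, by omega⟩
        have hdiv : (m+4)/4 = m/4 + 1 := by omega
        calc s (m+4) ≤ 2/3 * s m := hcontract m
          _ ≤ 2/3 * ((2/3:ℝ) ^ (m/4) * s 0) := by
              have := ih m (by omega)
              nlinarith
          _ = (2/3:ℝ) ^ ((m+4)/4) * s 0 := by rw [hdiv, pow_succ]; ring
  have hg : Tendsto (fun n : ℕ => (2/3:ℝ) ^ (n / 4) * s 0) atTop (nhds 0) := by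
    have h1 : Tendsto (fun k : ℕ => (2/3:ℝ) ^ k) atTop (nhds 0) :=
      tendsto_pow_atTop_nhds_zero_of_lt_one (by norm_num) (by norm_num)
    have h2 : Tendsto (fun n : ℕ => n / 4) atTop atTop :=
      tendsto_atTop_atTop.mpr fun b => ⟨4 * b, fun n hn => by omega⟩
    simpa using (h1.comp h2).mul_const (s 0)
  have hs_tend : Tendsto s atTop (nhds 0) := by
    refine squeeze_zero (fun n => ?_) hs_le hg
    exact Finset.sum_nonneg fun k _ => abs_nonneg _
  have habs : Tendsto (fun n => |(P ^ n) i j - pv j|) atTop (nhds 0) := by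
    refine squeeze_zero (fun n => abs_nonneg _) (fun n => ?_) hs_tend
    exact Finset.single_le_sum (f := fun k => |(P ^ n) i k - pv k|)
      (fun k _ => abs_nonneg _) (Finset.mem_univ j)
  have hdiff : Tendsto (fun n => (P ^ n) i j - pv j) atTop (nhds 0) :=
    (tendsto_zero_iff_abs_tendsto_zero _).mpr habs
  have := hdiff.add_const (pv j)
  simpa using this

/-- Asymptotic probabilities of 1, 2 and 3 zigzags: for any starting state i the
sums of n-step transition probabilities over the state groups {1,2,3,4}, {6,7}
and {5} converge to 8/15, 2/5 and 1/15 respectively. -/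
theorem limit_zigzag_probabilities (i : Fin 7) :
    Tendsto (fun n : ℕ => ∑ j ∈ ({0, 1, 2, 3} : Finset (Fin 7)), (P ^ n) i j)
      atTop (nhds (8/15)) ∧
    Tendsto (fun n : ℕ => ∑ j ∈ ({5, 6} : Finset (Fin 7)), (P ^ n) i j)
      atTop (nhds (2/5)) ∧
    Tendsto (fun n : ℕ => (P ^ n) i 4) atTop (nhds (1/15)) := by
  refine ⟨?_, ?_, ?_⟩
  · have h := (((entry_tendsto i 0).add (entry_tendsto i 1)).add
      (entry_tendsto i 2)).add (entry_tendsto i 3)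
    have e : ∀ n : ℕ, ∑ j ∈ ({0, 1, 2, 3} : Finset (Fin 7)), (P ^ n) i j
        = (P ^ n) i 0 + (P ^ n) i 1 + (P ^ n) i 2 + (P ^ n) i 3 := by
      intro n
      rw [Finset.sum_insert (by decide), Finset.sum_insert (by decide),
        Finset.sum_insert (by decide), Finset.sum_singleton]
      ring
    have hv : pv 0 + pv 1 + pv 2 + pv 3 = 8/15 := by
      have h0 : pv 0 = 1/15 := rfl
      have h1 : pv 1 = 1/15 := rfl
      have h2 : pv 2 = 1/5 := rfl
      have h3 : pv 3 = 1/5 := rfl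
      rw [h0, h1, h2, h3]; norm_num
    simpa [e, hv] using h
  · have h := (entry_tendsto i 5).add (entry_tendsto i 6)
    have e : ∀ n : ℕ, ∑ j ∈ ({5, 6} : Finset (Fin 7)), (P ^ n) i j
        = (P ^ n) i 5 + (P ^ n) i 6 := by
      intro n
      rw [Finset.sum_insert (by decide), Finset.sum_singleton]
    have hv : pv 5 + pv 6 = 2/5 := by
      have h5 : pv 5 = 1/5 := rfl
      have h6 : pv 6 = 1/5 := rfl
      rw [h5, h6]; norm_num
    simpa [e, hv] using h
  · have h := entry_tendsto i 4
    have hv : pv 4 = 1/15 := rfl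
    rwa [hv] at h
end
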